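/- Let n ≥ 2, 1 ≤ l < k ≤ n and ψ > 0 a real number. Suppose μ ∈ Γ_k ⊂ ℝ^n satisfies the equation σ_k(μ) = ψ·σ_l(μ). Then for every index 1 ≤ i ≤ n, k·σ_{k−1}(μ\^i) > l·ψ·σ_{l−1}(μ\^i). (This is the pointwise cone condition at a solution of the quotient equation, inequality (2.10) of the paper, which follows from the monotonicity of S_k/S_l.) -/
import Mathlib


/-- The `k`-th elementary symmetric polynomial `σ_k` of `x ∈ ℝⁿ`. -/
noncomputable def esymm {n : ℕ} (k : ℕ) (x : Fin n → ℝ) : ℝ :=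
  ∑ s ∈ Finset.univ.powersetCard k, ∏ i ∈ s, x i

/-- The Gårding cone `Γ_k = {x : σ_j(x) > 0 for all 1 ≤ j ≤ k}`. -/
def GammaCone {n : ℕ} (k : ℕ) (x : Fin n → ℝ) : Prop :=
  ∀ j : ℕ, 1 ≤ j → j ≤ k → 0 < esymm j x

/-- The vector `x\^i ∈ ℝ^{n-1}` obtained from `x ∈ ℝⁿ` by deleting its `i`-th coordinate. -/
def deleteAt {n : ℕ} (x : Fin n → ℝ) (i : Fin n) (j : Fin (n - 1)) : ℝ :=
  if (j : ℕ) < (i : ℕ) then x ⟨j, Nat.lt_of_lt_of_le j.isLt (Nat.sub_le n 1)⟩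
  else x ⟨(j : ℕ) + 1, Nat.add_lt_of_lt_sub j.isLt⟩


open Multiset Polynomial

namespace ConeAux

lemma mesymm_zero (s : Multiset ℝ) : s.esymm 0 = 1 := by
  simp [Multiset.esymm, Multiset.powersetCard_zero_left]

lemma mesymm_cons (a : ℝ) (s : Multiset ℝ) (k : ℕ) :
    (a ::ₘ s).esymm (k + 1) = s.esymm (k + 1) + a * s.esymm k := by
  rw [Multiset.esymm, Multiset.powersetCard_cons, Multiset.map_add, Multiset.sum_add,
    Multiset.map_map]
  congr 1
  rw [Multiset.esymm, ← Multiset.sum_map_mul_left]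
  congr 1
  apply Multiset.map_congr rfl
  intro t _
  simp [Multiset.prod_cons]

lemma mesymm_one (s : Multiset ℝ) : s.esymm 1 = s.sum := by
  rw [Multiset.esymm, Multiset.powersetCard_one, Multiset.map_map]
  simp

lemma mesymm_eq_zero (s : Multiset ℝ) (k : ℕ) (h : Multiset.card s < k) : s.esymm k = 0 := by
  rw [Multiset.esymm, Multiset.powersetCard_eq_empty _ h]
  simp

lemma mesymm_card (s : Multiset ℝ) : s.esymm (Multiset.card s) = s.prod := by
  induction s using Multiset.induction with
  | empty => simp [mesymm_zero]
  | cons a s ih =>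
    rw [Multiset.card_cons, mesymm_cons, mesymm_eq_zero s _ (by simp), ih]
    simp [Multiset.prod_cons]

lemma rolle_step (s : Multiset ℝ) (m : ℕ) (hm : Multiset.card s = m) (h1 : 1 ≤ m) :
    ∃ t : Multiset ℝ, Multiset.card t = m - 1 ∧
      ∀ j, j ≤ m - 1 → (m : ℝ) * t.esymm j = ((m - j : ℕ) : ℝ) * s.esymm j := by
  set p : Polynomial ℝ := (s.map fun a => X - C a).prod with hp
  have hmonic : p.Monic := monic_multiset_prod_of_monic _ _ fun a _ => monic_X_sub_C a
  have hdeg : p.natDegree = m := by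
    rw [hp, natDegree_multiset_prod_X_sub_C_eq_card, hm]
  have hroots : p.roots = s := roots_multiset_prod_X_sub_C s
  set q := derivative p with hq
  have hqc : q.coeff (m - 1) = m := by
    rw [hq, coeff_derivative]
    have e1 : m - 1 + 1 = m := by omega
    rw [e1]
    have e2 : p.coeff m = 1 := by
      rw [← hdeg]; exact hmonic.coeff_natDegree
    rw [e2, one_mul, ← e1]
    push_cast
    ring
  have hmne : ((m : ℝ)) ≠ 0 := by positivity
  have hqdeg : q.natDegree = m - 1 := by
    refine le_antisymm (by rw [hq]; exact (natDegree_derivative_le p).trans (by omega)) ?_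
    exact le_natDegree_of_ne_zero (by rw [hqc]; exact hmne)
  have hqlc : q.leadingCoeff = m := by rw [leadingCoeff, hqdeg, hqc]
  have hqroots : Multiset.card q.roots = q.natDegree := by
    have h2 := card_roots_le_derivative p
    have h3 := card_roots' q
    rw [hroots, hm] at h2
    rw [← hq] at h2
    omega
  refine ⟨q.roots, by rw [hqroots, hqdeg], fun j hj => ?_⟩
  have hk : m - 1 - j ≤ q.natDegree := by omega
  have hvieta := Polynomial.coeff_eq_esymm_roots_of_card hqroots hk
  have e3 : q.natDegree - (m - 1 - j) = j := by omega
  rw [e3, hqlc] at hvieta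
  have hder : q.coeff (m - 1 - j) = p.coeff (m - j) * ((m - j : ℕ) : ℝ) := by
    rw [hq, coeff_derivative]
    have e4 : m - 1 - j + 1 = m - j := by omega
    norm_cast
    rw [e4]
  have hps : p.coeff (m - j) = (-1) ^ j * s.esymm j := by
    have h5 : m - j ≤ Multiset.card s := by omega
    have := Multiset.prod_X_sub_C_coeff s h5
    rw [← hp] at this
    rw [this, hm]
    have e6 : m - (m - j) = j := by omega
    rw [e6]
  rw [hps] at hder
  rw [hder] at hvieta
  have hpow : ((-1 : ℝ)) ^ j ≠ 0 := by
    apply pow_ne_zero; norm_num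
  apply mul_left_cancel₀ hpow
  linear_combination -hvieta

lemma mesymm_reciprocal (s : Multiset ℝ) (h0 : (0 : ℝ) ∉ s) :
    ∀ j ≤ Multiset.card s,
      s.esymm (Multiset.card s - j) = s.prod * ((s.map fun a => a⁻¹).esymm j) := by
  induction s using Multiset.induction with
  | empty =>
    intro j hj
    have hj0 : j = 0 := by simpa using hj
    subst hj0
    simp [mesymm_zero]
  | cons a s ih =>
    intro j hj
    have ha : a ≠ 0 := fun h => h0 (h ▸ Multiset.mem_cons_self a s)
    have h0s : (0 : ℝ) ∉ s := fun h => h0 (Multiset.mem_cons_of_mem h)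
    have ihs := ih h0s
    rw [Multiset.card_cons] at hj ⊢
    rw [Multiset.map_cons, Multiset.prod_cons]
    rcases Nat.eq_or_lt_of_le hj with hje | hjlt
    · -- j = card s + 1
      subst hje
      rw [Nat.sub_self, mesymm_zero]
      have hcard : Multiset.card (a⁻¹ ::ₘ s.map fun a => a⁻¹) = Multiset.card s + 1 := by
        simp
      rw [← hcard, mesymm_card, Multiset.prod_cons]
      have hpi : (s.map fun a => a⁻¹).prod = s.prod⁻¹ := Multiset.prod_map_inv' s
      rw [hpi]
      have hne : s.prod ≠ 0 := Multiset.prod_ne_zero h0s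
      field_simp
    · have hjle : j ≤ Multiset.card s := by omega
      rcases Nat.eq_zero_or_pos j with hj0 | hjpos
      · subst hj0
        rw [Nat.sub_zero, mesymm_zero, mul_one]
        have : Multiset.card s + 1 = Multiset.card (a ::ₘ s) := by simp
        rw [this, mesymm_card, Multiset.prod_cons]
      · obtain ⟨j', rfl⟩ : ∃ j', j = j' + 1 := ⟨j - 1, by omega⟩
        have e1 : Multiset.card s + 1 - (j' + 1) = Multiset.card s - j' := by omega
        have e2 : Multiset.card s - j' = (Multiset.card s - (j' + 1)) + 1 := by omega
        rw [e1, e2, mesymm_cons, ← e2, mesymm_cons]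
        rw [ihs (j' + 1) hjle, ihs j' (by omega)]
        have e3 : Multiset.card s - j' = Multiset.card s - (j' + 1) + 1 := e2
        rw [e3] at *
        field_simp
        ring

lemma sq_nonneg_sum (s : Multiset ℝ) : 0 ≤ (s.map fun a => a ^ 2).sum := by
  induction s using Multiset.induction with
  | empty => simp
  | cons a s ih => rw [Multiset.map_cons, Multiset.sum_cons]; positivity

lemma cauchy_schwarz (s : Multiset ℝ) :
    s.sum ^ 2 ≤ (Multiset.card s : ℝ) * (s.map fun a => a ^ 2).sum := by
  induction s using Multiset.induction with
  | empty => simp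
  | cons a s ih =>
    rw [Multiset.map_cons, Multiset.sum_cons, Multiset.sum_cons, Multiset.card_cons]
    push_cast
    have hQ := sq_nonneg_sum s
    rcases eq_or_ne s 0 with rfl | hne
    · simp
    · have hn1 : 1 ≤ (Multiset.card s : ℝ) := by
        have : 1 ≤ Multiset.card s := Nat.one_le_iff_ne_zero.2 (by simpa using hne)
        exact_mod_cast this
      nlinarith [ih, hQ, sq_nonneg ((Multiset.card s : ℝ) * a - s.sum), hn1,
        mul_nonneg (sub_nonneg.2 hn1) (sub_nonneg.2 ih)]

lemma sum_sq_identity (s : Multiset ℝ) :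
    s.sum ^ 2 = (s.map fun a => a ^ 2).sum + 2 * s.esymm 2 := by
  induction s using Multiset.induction with
  | empty => simp [mesymm_eq_zero 0 2 (by simp)]
  | cons a s ih =>
    rw [Multiset.map_cons, Multiset.sum_cons, Multiset.sum_cons,
      show (2 : ℕ) = 1 + 1 from rfl, mesymm_cons, mesymm_one]
    rw [show (1 + 1 : ℕ) = 2 from rfl] at *
    nlinarith [ih]

lemma two_choose_two (m : ℕ) : 2 * m.choose 2 = m * (m - 1) := by
  induction m with
  | zero => simp
  | succ m ih =>
    rw [Nat.choose_succ_succ, Nat.mul_add, ih, Nat.choose_one_right]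
    cases m
    · simp
    · simp
      ring

lemma newton_top (s : Multiset ℝ) (m : ℕ) (hm : Multiset.card s = m) (hm2 : 2 ≤ m) :
    (m : ℝ) ^ 2 * (s.esymm (m - 2) * s.esymm m) ≤ (m.choose 2 : ℝ) * s.esymm (m - 1) ^ 2 := by
  by_cases h0 : (0 : ℝ) ∈ s
  · have : s.esymm m = 0 := by rw [← hm, mesymm_card]; exact Multiset.prod_eq_zero h0
    rw [this]
    have : (0:ℝ) ≤ (m.choose 2 : ℝ) * s.esymm (m - 1) ^ 2 := by positivity
    nlinarith
  · set t := s.map (fun a => a⁻¹) with ht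
    have hrec1 : s.esymm (m - 1) = s.prod * t.esymm 1 := by
      have := mesymm_reciprocal s h0 1 (by omega)
      rwa [hm] at this
    have hrec2 : s.esymm (m - 2) = s.prod * t.esymm 2 := by
      have := mesymm_reciprocal s h0 2 (by omega)
      rwa [hm] at this
    have hsm : s.esymm m = s.prod := by rw [← hm, mesymm_card]
    have hcard : (Multiset.card t : ℝ) = m := by rw [ht]; simp [hm]
    have hcs := cauchy_schwarz t
    rw [hcard] at hcs
    have hid := sum_sq_identity t
    have h1t : t.esymm 1 = t.sum := mesymm_one t
    -- core : m^2 * esymm 2 t ≤ C(m,2) * (t.sum)^2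
    have hchoose : 2 * (m.choose 2 : ℝ) = (m : ℝ) * ((m : ℝ) - 1) := by
      have := two_choose_two m
      have hcast : (2 * m.choose 2 : ℕ) = (m * (m-1) : ℕ) := this
      have : ((2 * m.choose 2 : ℕ) : ℝ) = ((m * (m-1) : ℕ) : ℝ) := by exact_mod_cast hcast
      push_cast [Nat.cast_sub (by omega : 1 ≤ m)] at this
      linarith
    have hcore : (m : ℝ) ^ 2 * t.esymm 2 ≤ (m.choose 2 : ℝ) * t.sum ^ 2 := by
      have hm0 : (0:ℝ) ≤ (m:ℝ) := by positivity
      nlinarith [mul_le_mul_of_nonneg_left hcs hm0]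
    rw [hrec1, hrec2, hsm, h1t]
    have hP2 : (0:ℝ) ≤ s.prod ^ 2 := sq_nonneg _
    nlinarith [mul_le_mul_of_nonneg_left hcore hP2]

lemma choose_mul_sub (m k : ℕ) (hm : 1 ≤ m) :
    m.choose k * (m - k) = m * (m - 1).choose k := by
  have h1 := Nat.choose_succ_right_eq m k
  obtain ⟨m', rfl⟩ : ∃ m', m = m' + 1 := ⟨m - 1, by omega⟩
  have h2 := Nat.add_one_mul_choose_eq m' k
  simp only [Nat.succ_eq_add_one, Nat.add_sub_cancel] at h2 ⊢
  omega

lemma newton_step_algebra (A B D a b d u v w m E1 E2 E3 E1t E2t E3t : ℝ)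
    (hr1 : m * E1t = u * E1) (hr2 : m * E2t = v * E2) (hr3 : m * E3t = w * E3)
    (hAv : A * v = m * a) (hBu : B * u = m * b) (hDw : D * w = m * d)
    (hu : 0 < u) (hv : 0 < v) (hw : 0 < w)
    (IH : a ^ 2 * (E1t * E3t) ≤ b * d * E2t ^ 2) :
    A ^ 2 * (E1 * E3) ≤ B * D * E2 ^ 2 := by
  have IH2 : a ^ 2 * ((u * E1) * (w * E3)) ≤ b * d * (v * E2) ^ 2 := by
    rw [← hr1, ← hr3, ← hr2]
    nlinarith [IH, sq_nonneg m]
  have hfac : (0 : ℝ) < u * w * v ^ 2 := by positivity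
  have key : (A ^ 2 * (E1 * E3)) * (u * w * v ^ 2) ≤ (B * D * E2 ^ 2) * (u * w * v ^ 2) := by
    calc (A ^ 2 * (E1 * E3)) * (u * w * v ^ 2)
        = (A * v) ^ 2 * (u * w * (E1 * E3)) := by ring
      _ = (m * a) ^ 2 * (u * w * (E1 * E3)) := by rw [hAv]
      _ = m ^ 2 * (a ^ 2 * ((u * E1) * (w * E3))) := by ring
      _ ≤ m ^ 2 * (b * d * (v * E2) ^ 2) := by
          apply mul_le_mul_of_nonneg_left IH2 (by positivity)
      _ = (m * b) * (m * d) * (v ^ 2 * E2 ^ 2) := by ring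
      _ = (B * u) * (D * w) * (v ^ 2 * E2 ^ 2) := by rw [hBu, hDw]
      _ = (B * D * E2 ^ 2) * (u * w * v ^ 2) := by ring
  exact le_of_mul_le_mul_right key hfac

lemma newton_normalized :
    ∀ (m : ℕ) (s : Multiset ℝ), Multiset.card s = m → ∀ j, 1 ≤ j → j + 1 ≤ m →
      (m.choose j : ℝ) ^ 2 * (s.esymm (j - 1) * s.esymm (j + 1)) ≤
        (m.choose (j - 1) : ℝ) * (m.choose (j + 1) : ℝ) * s.esymm j ^ 2 := by
  intro m
  induction m using Nat.strong_induction_on with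
  | _ m IH =>
    intro s hs j hj1 hj2
    rcases eq_or_lt_of_le hj2 with heq | hlt
    · -- top case : j + 1 = m
      have hm2 : 2 ≤ m := by omega
      have e1 : j - 1 = m - 2 := by omega
      have e2 : j + 1 = m := by omega
      have e3 : j = m - 1 := by omega
      have c1 : m.choose (m - 1) = m := by
        have h := Nat.choose_symm (show m - 1 ≤ m by omega)
        rw [show m - (m - 1) = 1 by omega, Nat.choose_one_right] at h
        omega
      have c2 : m.choose (m - 2) = m.choose 2 := Nat.choose_symm (by omega : 2 ≤ m)
      have c3 : m.choose m = 1 := Nat.choose_self m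
      rw [e1, e2, e3, c1, c2, c3]
      have := newton_top s m hs hm2
      push_cast
      nlinarith [this]
    · -- inductive case : j + 1 < m
      have hm3 : 3 ≤ m := by omega
      obtain ⟨t, htc, hrel⟩ := rolle_step s m hs (by omega)
      have IH' := IH (m - 1) (by omega) t htc j hj1 (by omega)
      have hr1 : (m : ℝ) * t.esymm (j-1) = ((m - (j-1) : ℕ) : ℝ) * s.esymm (j-1) :=
        hrel (j - 1) (by omega)
      have hr2 : (m : ℝ) * t.esymm j = ((m - j : ℕ) : ℝ) * s.esymm j := hrel j (by omega)
      have hr3 : (m : ℝ) * t.esymm (j+1) = ((m - (j+1) : ℕ) : ℝ) * s.esymm (j+1) :=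
        hrel (j + 1) (by omega)
      have hAv : (m.choose j : ℝ) * ((m - j : ℕ) : ℝ) = (m : ℝ) * ((m-1).choose j : ℝ) := by
        exact_mod_cast choose_mul_sub m j (by omega)
      have hBu : (m.choose (j-1) : ℝ) * ((m - (j-1) : ℕ) : ℝ)
          = (m : ℝ) * ((m-1).choose (j-1) : ℝ) := by
        exact_mod_cast choose_mul_sub m (j-1) (by omega)
      have hDw : (m.choose (j+1) : ℝ) * ((m - (j+1) : ℕ) : ℝ)
          = (m : ℝ) * ((m-1).choose (j+1) : ℝ) := by
        exact_mod_cast choose_mul_sub m (j+1) (by omega)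
      have hupos : (0 : ℝ) < ((m - (j-1) : ℕ) : ℝ) := by
        exact_mod_cast (show 0 < m - (j-1) by omega)
      have hvpos : (0 : ℝ) < ((m - j : ℕ) : ℝ) := by
        exact_mod_cast (show 0 < m - j by omega)
      have hwpos : (0 : ℝ) < ((m - (j+1) : ℕ) : ℝ) := by
        exact_mod_cast (show 0 < m - (j+1) by omega)
      exact newton_step_algebra _ _ _ _ _ _ _ _ _ _ _ _ _ _ _ _ hr1 hr2 hr3 hAv hBu hDw
        hupos hvpos hwpos IH'

lemma choose_logconcave (m j : ℕ) (hj : 1 ≤ j) (hjm : j + 1 ≤ m) :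
    m.choose (j - 1) * m.choose (j + 1) ≤ m.choose j ^ 2 := by
  have h1 := Nat.choose_succ_right_eq m (j - 1)
  have h2 := Nat.choose_succ_right_eq m j
  rw [show j - 1 + 1 = j by omega] at h1
  have e1 : m - (j - 1) = m - j + 1 := by omega
  rw [e1] at h1
  -- h1 : m.choose j * j = m.choose (j-1) * (m - j + 1)
  -- h2 : m.choose (j+1) * (j+1) = m.choose j * (m - j)
  have key : (m.choose (j - 1) * m.choose (j + 1)) * ((m - j + 1) * (j + 1))
      ≤ m.choose j ^ 2 * ((m - j + 1) * (j + 1)) := by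
    have e2 : (m.choose (j - 1) * m.choose (j + 1)) * ((m - j + 1) * (j + 1))
        = (m.choose (j - 1) * (m - j + 1)) * (m.choose (j + 1) * (j + 1)) := by ring
    rw [e2, ← h1, h2]
    have : m.choose j * j * (m.choose j * (m - j)) = m.choose j ^ 2 * (j * (m - j)) := by ring
    rw [this]
    apply Nat.mul_le_mul_left
    rw [Nat.mul_comm (m - j + 1) (j + 1)]
    exact Nat.mul_le_mul (by omega) (by omega)
  exact Nat.le_of_mul_le_mul_right key (Nat.mul_pos (by omega) (by omega))

lemma newton' (s : Multiset ℝ) (j : ℕ) (hj : 1 ≤ j) :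
    s.esymm (j - 1) * s.esymm (j + 1) ≤ s.esymm j ^ 2 := by
  by_cases h : j + 1 ≤ Multiset.card s
  · have hN := newton_normalized (Multiset.card s) s rfl j hj h
    have hlc : ((Multiset.card s).choose (j - 1) * (Multiset.card s).choose (j + 1) : ℝ)
        ≤ ((Multiset.card s).choose j : ℝ) ^ 2 := by
      exact_mod_cast choose_logconcave (Multiset.card s) j hj h
    have hpos : (0 : ℝ) < ((Multiset.card s).choose j : ℝ) ^ 2 := by
      have : 0 < (Multiset.card s).choose j := Nat.choose_pos (by omega)
      positivity
    rcases le_or_gt (s.esymm (j - 1) * s.esymm (j + 1)) 0 with hle | hgt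
    · nlinarith [sq_nonneg (s.esymm j)]
    · have h2 : ((Multiset.card s).choose j : ℝ) ^ 2 * (s.esymm (j - 1) * s.esymm (j + 1))
          ≤ ((Multiset.card s).choose j : ℝ) ^ 2 * s.esymm j ^ 2 := by
        calc ((Multiset.card s).choose j : ℝ) ^ 2 * (s.esymm (j - 1) * s.esymm (j + 1))
            ≤ ((Multiset.card s).choose (j - 1) : ℝ) * ((Multiset.card s).choose (j + 1) : ℝ)
              * s.esymm j ^ 2 := hN
          _ ≤ ((Multiset.card s).choose j : ℝ) ^ 2 * s.esymm j ^ 2 := by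
              apply mul_le_mul_of_nonneg_right _ (sq_nonneg _)
              exact hlc
      exact le_of_mul_le_mul_left h2 hpos
  · rw [mesymm_eq_zero s (j + 1) (by omega)]
    nlinarith [sq_nonneg (s.esymm j)]

lemma cone_delete :
    ∀ (k : ℕ), 1 ≤ k → ∀ (a : ℝ) (s : Multiset ℝ),
      (∀ j, 1 ≤ j → j ≤ k → 0 < (a ::ₘ s).esymm j) → ∀ j, j ≤ k - 1 → 0 < s.esymm j := by
  intro k
  induction k with
  | zero => intro h; omega
  | succ k IH =>
    intro _ a s hpos j hj
    simp only [Nat.add_sub_cancel] at hj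
    rcases Nat.eq_zero_or_pos k with rfl | hk1
    · -- j = 0
      have : j = 0 := by omega
      subst this
      rw [mesymm_zero]; norm_num
    · have IH' := IH hk1 a s (fun i hi1 hi2 => hpos i hi1 (by omega))
      rcases Nat.lt_or_ge j k with hjk | hjk
      · exact IH' j (by omega)
      · have hjek : j = k := by omega
        subst hjek
        by_contra hc
        push_neg at hc
        have hp : 0 < s.esymm (j - 1) := IH' (j - 1) (by omega)
        have h2 : 0 < s.esymm j + a * s.esymm (j - 1) := by
          have := hpos j (by omega) (by omega)
          rwa [show j = (j - 1) + 1 by omega, mesymm_cons, ← show j = (j - 1) + 1 by omega]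
            at this
        have h3 : 0 < s.esymm (j + 1) + a * s.esymm j := by
          have := hpos (j + 1) (by omega) (by omega)
          rwa [mesymm_cons] at this
        have h4 : s.esymm (j - 1) * s.esymm (j + 1) ≤ s.esymm j ^ 2 := newton' s j (by omega)
        nlinarith [mul_pos hp h3, mul_nonneg (neg_nonneg.2 hc) h2.le, h4]

lemma chain :
    ∀ (d l : ℕ), 1 ≤ l → ∀ s : Multiset ℝ, (∀ j, j ≤ l + d → 0 < s.esymm j) →
      s.esymm (l + d + 1) * s.esymm (l - 1) ≤ s.esymm (l + d) * s.esymm l := by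
  intro d
  induction d with
  | zero =>
    intro l hl s _
    have := newton' s l hl
    rw [show l + 0 + 1 = l + 1 by omega, show l + 0 = l by omega]
    nlinarith [this]
  | succ d IH =>
    intro l hl s hpos
    have IH' := IH l hl s (fun j hj => hpos j (by omega))
    have hN : s.esymm (l + d) * s.esymm (l + d + 2) ≤ s.esymm (l + d + 1) ^ 2 := by
      have := newton' s (l + d + 1) (by omega)
      rw [show l + d + 1 - 1 = l + d by omega, show l + d + 1 + 1 = l + d + 2 by omega] at this
      exact this
    have p1 : 0 < s.esymm (l - 1) := hpos (l - 1) (by omega)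
    have p2 : 0 < s.esymm l := hpos l (by omega)
    have p3 : 0 < s.esymm (l + d + 1) := hpos (l + d + 1) (by omega)
    have p4 : 0 < s.esymm (l + d) := hpos (l + d) (by omega)
    rw [show l + (d + 1) + 1 = l + d + 2 by omega, show l + (d + 1) = l + d + 1 by omega]
    rcases le_or_gt (s.esymm (l + d + 2)) 0 with hle | hgt
    · nlinarith [mul_pos p3 p2, mul_nonneg (neg_nonneg.2 hle) p1.le]
    · have t1 : s.esymm (l + d + 2) * s.esymm (l - 1) * s.esymm (l + d)
          ≤ s.esymm (l + d + 1) ^ 2 * s.esymm (l - 1) := by nlinarith [hN, p1]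
      have t2 : s.esymm (l + d + 1) ^ 2 * s.esymm (l - 1)
          ≤ s.esymm (l + d + 1) * s.esymm (l + d) * s.esymm l := by nlinarith [IH', p3]
      have := le_trans t1 t2
      have goal' : (s.esymm (l + d + 2) * s.esymm (l - 1)) * s.esymm (l + d)
          ≤ (s.esymm (l + d + 1) * s.esymm l) * s.esymm (l + d) := by nlinarith [this]
      exact le_of_mul_le_mul_right goal' p4

lemma esymm_eq_multiset {n : ℕ} (k : ℕ) (x : Fin n → ℝ) :
    esymm k x = (Finset.univ.val.map x).esymm k :=
  (Finset.esymm_map_val x Finset.univ k).symm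

lemma delete_cons {n : ℕ} (x : Fin n → ℝ) (i : Fin n) :
    (Finset.univ.val.map x) = x i ::ₘ (Finset.univ.val.map (deleteAt x i)) := by
  set e : Fin (n - 1) → Fin n := fun j =>
    if h : (j : ℕ) < (i : ℕ) then ⟨j, Nat.lt_of_lt_of_le j.isLt (Nat.sub_le n 1)⟩
    else ⟨(j : ℕ) + 1, Nat.add_lt_of_lt_sub j.isLt⟩ with he
  have hde : deleteAt x i = x ∘ e := by
    funext j
    simp only [deleteAt, he, Function.comp_apply]
    split_ifs with h
    · rfl
    · rfl
  have hinj : Function.Injective e := by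
    intro a b hab
    have h := congrArg Fin.val hab
    simp only [he] at h
    split_ifs at h with h1 h2 h3 <;> (apply Fin.ext; simp at h; omega)
  have himg : Finset.image e Finset.univ = Finset.univ.erase i := by
    apply Finset.eq_of_subset_of_card_le
    · intro y hy
      rw [Finset.mem_image] at hy
      obtain ⟨j, _, rfl⟩ := hy
      refine Finset.mem_erase.2 ⟨?_, Finset.mem_univ _⟩
      simp only [he]
      split_ifs with h
      · exact Fin.ne_of_val_ne (show (j : ℕ) ≠ (i : ℕ) by omega)
      · exact Fin.ne_of_val_ne (show (j : ℕ) + 1 ≠ (i : ℕ) by omega)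
    · rw [Finset.card_erase_of_mem (Finset.mem_univ i),
        Finset.card_image_of_injective _ hinj]
      simp
  have hval : (Finset.univ : Finset (Fin n)).val = i ::ₘ (Finset.univ.erase i).val := by
    rw [Finset.erase_val]
    exact (Multiset.cons_erase (by simp : i ∈ (Finset.univ : Finset (Fin n)).val)).symm
  rw [hval, Multiset.map_cons]
  congr 1
  rw [← himg, Finset.image_val_of_injOn hinj.injOn, Multiset.map_map, hde]

lemma final_algebra (K L ψ El Ek X Y : ℝ) (hψ : 0 < ψ) (hEl : 0 < El) (hY : 0 < Y)
    (hL0 : 0 ≤ L) (hKL : L + 1 ≤ K) (heqq : Ek = ψ * El) (key : Ek * Y ≤ X * El) :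
    L * ψ * Y < K * X := by
  have hK0 : (0 : ℝ) ≤ K := by linarith
  have h1 : K * (Ek * Y) ≤ K * (X * El) := mul_le_mul_of_nonneg_left key hK0
  rw [heqq] at h1
  have h2 : 0 < ψ * El * Y := by positivity
  have h3 : (L * ψ * Y) * El < (K * X) * El := by nlinarith [h1, h2]
  exact lt_of_mul_lt_mul_right h3 hEl.le

end ConeAux

open ConeAux

/-- the pointwise cone condition at a solution of the quotient equation. -/
theorem cone_condition_at_solution (n k l : ℕ) (hn : 2 ≤ n) (hl1 : 1 ≤ l) (hlk : l < k)
    (hkn : k ≤ n) (ψ : ℝ) (hψ : 0 < ψ) (mu : Fin n → ℝ) (hmu : GammaCone k mu)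
    (heq : esymm k mu = ψ * esymm l mu) (i : Fin n) :
    (k : ℝ) * esymm (k - 1) (deleteAt mu i) > (l : ℝ) * ψ * esymm (l - 1) (deleteAt mu i) := by
  obtain ⟨l', rfl⟩ : ∃ l', l = l' + 1 := ⟨l - 1, by omega⟩
  obtain ⟨d, rfl⟩ : ∃ d, k = l' + 1 + d + 1 := ⟨k - l' - 2, by omega⟩
  set ν : Multiset ℝ := Finset.univ.val.map (deleteAt mu i) with hν
  have hcons : Finset.univ.val.map mu = mu i ::ₘ ν := delete_cons mu i
  have hG : ∀ j, 1 ≤ j → j ≤ l' + 1 + d + 1 → 0 < (mu i ::ₘ ν).esymm j := by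
    intro j h1 h2
    have := hmu j h1 h2
    rwa [esymm_eq_multiset, hcons] at this
  have hpos : ∀ j, j ≤ l' + 1 + d → 0 < ν.esymm j := by
    intro j hj
    exact cone_delete (l' + 1 + d + 1) (by omega) (mu i) ν hG j (by omega)
  have hch := chain d (l' + 1) (by omega) ν (fun j hj => hpos j (by omega))
  simp only [Nat.add_sub_cancel] at hch ⊢
  -- hch : ν.esymm (l' + 1 + d + 1) * ν.esymm l' ≤ ν.esymm (l' + 1 + d) * ν.esymm (l' + 1)
  have hEk : esymm (l' + 1 + d + 1) mu
      = ν.esymm (l' + 1 + d + 1) + mu i * ν.esymm (l' + 1 + d) := by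
    rw [esymm_eq_multiset, hcons, mesymm_cons]
  have hEl : esymm (l' + 1) mu = ν.esymm (l' + 1) + mu i * ν.esymm l' := by
    rw [esymm_eq_multiset, hcons, mesymm_cons]
  have key : esymm (l' + 1 + d + 1) mu * ν.esymm l'
      ≤ ν.esymm (l' + 1 + d) * esymm (l' + 1) mu := by
    rw [hEk, hEl]
    nlinarith [hch]
  have hElpos : 0 < esymm (l' + 1) mu := hmu (l' + 1) (by omega) (by omega)
  have hYpos : 0 < ν.esymm l' := hpos l' (by omega)
  have hbridge1 : esymm (l' + 1 + d) (deleteAt mu i) = ν.esymm (l' + 1 + d) :=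
    esymm_eq_multiset _ _
  have hbridge2 : esymm l' (deleteAt mu i) = ν.esymm l' := esymm_eq_multiset _ _
  rw [hbridge1, hbridge2]
  have hKL : ((l' + 1 : ℕ) : ℝ) + 1 ≤ ((l' + 1 + d + 1 : ℕ) : ℝ) := by push_cast; linarith
  have := final_algebra ((l' + 1 + d + 1 : ℕ) : ℝ) ((l' + 1 : ℕ) : ℝ) ψ
    (esymm (l' + 1) mu) (esymm (l' + 1 + d + 1) mu)
    (ν.esymm (l' + 1 + d)) (ν.esymm l') hψ hElpos hYpos (by positivity) hKL heq key
  exact this
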